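/- Let (p_n)_{n≥0} be real polynomials with deg p_n = n satisfying Σ_{l=1}^{m} a_l(x)·p_n^{(l)}(x) = γ_n·p_n(x) for all n ≥ 0, where each a_l is a real polynomial of degree at most l and the γ_n are real numbers. Then the associated 2×2 matrix polynomials P_n satisfy Σ_{k=0}^{m} P_n^{(k)}(x)·A_k(x) = Γ_n·P_n(x) for all n ≥ 0, where A_k(x) = Σ_{l=k}^{m} C_{k,l}(x) (with the convention a_0 = 0, so terms with l = 0 vanish) and Γ_n is the diagonal matrix diag(γ_{2n}, γ_{2n+1}). -/
import Mathlib


open Polynomial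

/-- The splitting operator `R_{N,m}`: the coefficient of `x^n` in `RNm N m p`
is the coefficient of `x^{nN+m}` in `p`. -/
noncomputable def RNm (N m : ℕ) (p : ℝ[X]) : ℝ[X] :=
  ∑ n ∈ Finset.range (p.natDegree + 1), C (p.coeff (n * N + m)) * X ^ n

/-- The `N×N` matrix polynomials associated to a sequence of scalar polynomials:
the `(i,j)` entry of `P_n` is `R_{N,j}(p_{nN+i})`. -/
noncomputable def matPoly (N : ℕ) (p : ℕ → ℝ[X]) (n : ℕ) :
    Matrix (Fin N) (Fin N) ℝ[X] :=
  Matrix.of fun i j : Fin N => RNm N (j : ℕ) (p (n * N + (i : ℕ)))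

/-- The polynomial `b_{k,l}(x)` from the paper, `0` unless `⌈l/2⌉ ≤ k ≤ l`. -/
noncomputable def bkl (k l : ℕ) : ℝ[X] :=
  if (l + 1) / 2 ≤ k ∧ k ≤ l then
    C (((-1 : ℝ) ^ k / (k.factorial : ℝ)) *
        ∑ j ∈ Finset.Icc ((l + 1) / 2) k,
          (-1 : ℝ) ^ j * (k.choose j : ℝ) * ∏ t ∈ Finset.range l, ((2 * j : ℝ) - (t : ℝ)))
      * X ^ (2 * k - l)
  else 0

/-- The `2×2` polynomial matrix `C_{k,l}` built from a polynomial `a`. -/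
noncomputable def Ckl (k l : ℕ) (a : ℝ[X]) : Matrix (Fin 2) (Fin 2) ℝ[X] :=
  (Matrix.of ![![RNm 2 0 (bkl k l), RNm 2 1 (bkl k l)],
      ![X * RNm 2 1 (bkl k l) + (l : ℝ[X]) * RNm 2 0 (bkl k (l - 1)),
        RNm 2 0 (bkl k l) + (l : ℝ[X]) * RNm 2 1 (bkl k (l - 1))]]) *
    (Matrix.of ![![RNm 2 0 a, RNm 2 1 a], ![X * RNm 2 1 a, RNm 2 0 a]])

/-- Entrywise `k`-th derivative of a `2×2` matrix of polynomials. -/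
noncomputable def matDeriv (k : ℕ) (P : Matrix (Fin 2) (Fin 2) ℝ[X]) :
    Matrix (Fin 2) (Fin 2) ℝ[X] :=
  Matrix.of fun i j => derivative^[k] (P i j)



open Finset
open scoped fwdDiff


lemma coeff_RNm {N : ℕ} (hN : 0 < N) (m : ℕ) (p : ℝ[X]) (n : ℕ) :
    (RNm N m p).coeff n = p.coeff (n * N + m) := by
  rw [RNm, finset_sum_coeff]
  simp only [coeff_C_mul, coeff_X_pow, mul_ite, mul_one, mul_zero]
  rw [Finset.sum_ite_eq (Finset.range (p.natDegree + 1)) n]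
  split
  · rfl
  · rename_i h
    simp only [Finset.mem_range, not_lt] at h
    rw [p.coeff_eq_zero_of_natDegree_lt]
    calc p.natDegree < p.natDegree + 1 := Nat.lt_succ_self _
      _ ≤ n := h
      _ ≤ n * N := Nat.le_mul_of_pos_right n hN
      _ ≤ n * N + m := Nat.le_add_right _ _

lemma RNm_zero (N m : ℕ) : RNm N m 0 = 0 := by simp [RNm]

lemma RNm_add {N : ℕ} (hN : 0 < N) (m : ℕ) (p q : ℝ[X]) :
    RNm N m (p + q) = RNm N m p + RNm N m q := by
  ext n; simp [coeff_RNm hN]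

lemma RNm_C_mul {N : ℕ} (hN : 0 < N) (m : ℕ) (c : ℝ) (p : ℝ[X]) :
    RNm N m (C c * p) = C c * RNm N m p := by
  ext n; simp [coeff_RNm hN]




lemma RNm_two_X_pow (j t : ℕ) (hj : j < 2) :
    RNm 2 j (X ^ t : ℝ[X]) = if t % 2 = j then X ^ (t / 2) else 0 := by
  ext n
  rw [coeff_RNm two_pos, coeff_X_pow]
  by_cases hB : t % 2 = j
  · rw [if_pos hB, coeff_X_pow]
    by_cases hC : n = t / 2
    · rw [if_pos hC, if_pos (by omega)]
    · rw [if_neg hC, if_neg (by omega)]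
  · rw [if_neg hB, coeff_zero, if_neg (by omega)]







lemma R0_even (n : ℕ) : RNm 2 0 (X ^ (2 * n) : ℝ[X]) = X ^ n := by
  rw [RNm_two_X_pow 0 _ (by omega), if_pos (by omega)]; congr 1; omega
lemma R0_odd (n : ℕ) : RNm 2 0 (X ^ (2 * n + 1) : ℝ[X]) = 0 := by
  rw [RNm_two_X_pow 0 _ (by omega), if_neg (by omega)]
lemma R1_even (n : ℕ) : RNm 2 1 (X ^ (2 * n) : ℝ[X]) = 0 := by
  rw [RNm_two_X_pow 1 _ (by omega), if_neg (by omega)]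
lemma R1_odd (n : ℕ) : RNm 2 1 (X ^ (2 * n + 1) : ℝ[X]) = X ^ n := by
  rw [RNm_two_X_pow 1 _ (by omega), if_pos (by omega)]; congr 1; omega

lemma RNm_mul (a s : ℝ[X]) :
    RNm 2 0 (a * s) = RNm 2 0 a * RNm 2 0 s + X * (RNm 2 1 a * RNm 2 1 s) ∧
    RNm 2 1 (a * s) = RNm 2 1 a * RNm 2 0 s + RNm 2 0 a * RNm 2 1 s := by
  induction a using Polynomial.induction_on' with
  | add p q hp hq =>
    rw [add_mul]
    rw [RNm_add two_pos 0, RNm_add two_pos 0, RNm_add two_pos 1,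
      RNm_add two_pos 1]
    constructor
    · rw [hp.1, hq.1]; ring
    · rw [hp.2, hq.2]; ring
  | monomial u c =>
    induction s using Polynomial.induction_on' with
    | add p q hp hq =>
      rw [mul_add]
      rw [RNm_add two_pos 0, RNm_add two_pos 0, RNm_add two_pos 1,
        RNm_add two_pos 1]
      constructor
      · rw [hp.1, hq.1]; ring
      · rw [hp.2, hq.2]; ring
    | monomial v d =>
      rw [← C_mul_X_pow_eq_monomial, ← C_mul_X_pow_eq_monomial]
      have key : (C c * X ^ u) * (C d * X ^ v) = C (c * d) * (X ^ u * X ^ v) := by rw [C_mul]; ring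
      rw [key, RNm_C_mul two_pos, RNm_C_mul two_pos, RNm_C_mul two_pos, RNm_C_mul two_pos,
        RNm_C_mul two_pos, RNm_C_mul two_pos]
      suffices h : RNm 2 0 (X ^ u * X ^ v : ℝ[X]) =
            RNm 2 0 (X ^ u : ℝ[X]) * RNm 2 0 (X ^ v : ℝ[X]) +
              X * (RNm 2 1 (X ^ u : ℝ[X]) * RNm 2 1 (X ^ v : ℝ[X])) ∧
          RNm 2 1 (X ^ u * X ^ v : ℝ[X]) =
            RNm 2 1 (X ^ u : ℝ[X]) * RNm 2 0 (X ^ v : ℝ[X]) +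
              RNm 2 0 (X ^ u : ℝ[X]) * RNm 2 1 (X ^ v : ℝ[X]) by
        constructor
        · rw [h.1]; push_cast [C_mul]; ring
        · rw [h.2]; push_cast [C_mul]; ring
      rw [← pow_add]
      rcases Nat.even_or_odd u with ⟨u', rfl⟩ | ⟨u', rfl⟩ <;>
        rcases Nat.even_or_odd v with ⟨v', rfl⟩ | ⟨v', rfl⟩
      · have e1 : (X:ℝ[X]) ^ (u' + u' + (v' + v')) = X ^ (2 * (u' + v')) := by
          rw [show u' + u' + (v' + v') = 2 * (u' + v') by ring]
        have e2 : u' + u' = 2 * u' := by ring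
        have e3 : v' + v' = 2 * v' := by ring
        rw [e1]
        simp only [e2, e3, R0_even, R1_even]
        constructor <;> ring
      · have e1 : (X:ℝ[X]) ^ (u' + u' + (2 * v' + 1)) = X ^ (2 * (u' + v') + 1) := by
          rw [show u' + u' + (2 * v' + 1) = 2 * (u' + v') + 1 by ring]
        have e2 : u' + u' = 2 * u' := by ring
        rw [e1]
        simp only [e2, R0_even, R1_even, R0_odd, R1_odd]
        constructor <;> ring
      · have e1 : (X:ℝ[X]) ^ (2 * u' + 1 + (v' + v')) = X ^ (2 * (u' + v') + 1) := by
          rw [show 2 * u' + 1 + (v' + v') = 2 * (u' + v') + 1 by ring]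
        have e3 : v' + v' = 2 * v' := by ring
        rw [e1]
        simp only [e3, R0_even, R1_even, R0_odd, R1_odd]
        constructor <;> ring
      · have e1 : (X:ℝ[X]) ^ (2 * u' + 1 + (2 * v' + 1)) = X ^ (2 * (u' + v' + 1)) := by
          rw [show 2 * u' + 1 + (2 * v' + 1) = 2 * (u' + v' + 1) by ring]
        rw [e1]
        simp only [R0_even, R1_even, R0_odd, R1_odd]
        constructor <;> ring

noncomputable def cC (k l : ℕ) : ℝ :=
  if (l + 1) / 2 ≤ k ∧ k ≤ l then
    ((-1 : ℝ) ^ k / (k.factorial : ℝ)) *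
      ∑ j ∈ Finset.Icc ((l + 1) / 2) k,
        (-1 : ℝ) ^ j * (k.choose j : ℝ) * ∏ t ∈ Finset.range l, ((2 * j : ℝ) - (t : ℝ))
  else 0

noncomputable def Ffun (l : ℕ) (j : ℕ) : ℝ := ∏ t ∈ Finset.range l, ((2 * j : ℝ) - (t : ℝ))

lemma Ffun_eq_zero {l j : ℕ} (h : j < (l + 1) / 2) : Ffun l j = 0 := by
  apply Finset.prod_eq_zero (i := 2 * j) (Finset.mem_range.mpr (by omega))
  push_cast; ring

lemma cC_zero_left {k l : ℕ} (h : k < (l + 1) / 2) : cC k l = 0 := by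
  rw [cC, if_neg (by omega)]

lemma cC_zero_right {k l : ℕ} (h : l < k) : cC k l = 0 := by
  rw [cC, if_neg (by omega)]

-- iterated forward difference of the zero function
lemma fwdDiff_iter_zero_fun (k : ℕ) :
    (fwdDiff (1 : ℕ))^[k] (fun _ : ℕ => (0 : ℝ)) = fun _ => 0 := by
  induction k with
  | zero => rfl
  | succ k ih =>
    rw [Function.iterate_succ_apply,
      show fwdDiff (1 : ℕ) (fun _ : ℕ => (0 : ℝ)) = fun _ => 0 from funext fun y => by
        simp [fwdDiff], ih]

/-- iterated forward differences kill polynomials of low degree -/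
lemma fwdDiff_iter_poly (k : ℕ) :
    ∀ P : ℝ[X], P.natDegree < k →
      (fwdDiff (1 : ℕ))^[k] (fun n : ℕ => P.eval (n : ℝ)) = fun _ => 0 := by
  induction k with
  | zero => intro P h; omega
  | succ k ih =>
    intro P hP
    set Q : ℝ[X] := P.comp (X + C 1) - P with hQdef
    have hstep : fwdDiff (1 : ℕ) (fun n : ℕ => P.eval (n : ℝ)) = fun n : ℕ => Q.eval (n : ℝ) := by
      funext y
      simp only [fwdDiff, hQdef, eval_sub, eval_comp, eval_add, eval_X, eval_C]
      push_cast
      ring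
    rw [Function.iterate_succ_apply, hstep]
    by_cases hd : P.natDegree = 0
    · obtain ⟨c, rfl⟩ := natDegree_eq_zero.mp hd
      have hQ0 : Q = 0 := by simp [hQdef]
      rw [hQ0]
      simpa using fwdDiff_iter_zero_fun k
    · apply ih
      -- show natDegree Q < k
      set d := P.natDegree with hdd
      have hco : (P.comp (X + C 1)).coeff d = P.coeff d := by
        have hh : hasseDeriv d P = C (P.coeff d) := by
          ext n
          rw [hasseDeriv_coeff, coeff_C]
          rcases n with _ | n
          · simp
          · rw [if_neg (by omega), P.coeff_eq_zero_of_natDegree_lt (by omega), mul_zero]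
        rw [← taylor_apply, taylor_coeff, hh, eval_C]
      have hQd : Q.coeff d = 0 := by
        rw [hQdef, coeff_sub, hco, sub_self]
      have hQle : Q.natDegree ≤ d := by
        refine le_trans (natDegree_sub_le _ _) ?_
        have h2 : (P.comp (X + C 1)).natDegree = d := by
          rw [← taylor_apply, natDegree_taylor]
        rw [h2, ← hdd, sup_idem]
      by_cases hQ0 : Q = 0
      · rw [hQ0, natDegree_zero]; omega
      · have hne : Q.natDegree ≠ d := fun hEq =>
          hQ0 (leadingCoeff_eq_zero.mp (by rw [leadingCoeff, hEq]; exact hQd))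
        omega

lemma Ffun_poly (l : ℕ) :
    Ffun l = fun n : ℕ => (∏ t ∈ Finset.range l, (C 2 * X - C (t : ℝ))).eval (n : ℝ) := by
  funext n
  rw [Ffun, eval_prod]
  exact Finset.prod_congr rfl fun t _ => by simp

lemma Ffun_natDegree_le (l : ℕ) :
    (∏ t ∈ Finset.range l, (C 2 * X - C (t : ℝ))).natDegree ≤ l := by
  refine le_trans (natDegree_prod_le _ _) ?_
  calc ∑ t ∈ Finset.range l, (C 2 * X - C (t : ℝ)).natDegree
      ≤ ∑ _t ∈ Finset.range l, 1 := by
        refine Finset.sum_le_sum fun t _ => ?_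
        refine le_trans (natDegree_sub_le _ _) ?_
        simp [natDegree_C_mul_le]
    _ = l := by simp

lemma DeltaF_zero {l k : ℕ} (h : l < k) :
    (fwdDiff (1 : ℕ))^[k] (Ffun l) = fun _ => 0 := by
  rw [Ffun_poly]
  exact fwdDiff_iter_poly k _ (lt_of_le_of_lt (Ffun_natDegree_le l) h)

lemma cC_eq (k l : ℕ) :
    cC k l = (1 / (k.factorial : ℝ)) * (fwdDiff (1 : ℕ))^[k] (Ffun l) 0 := by
  have hdelta : (fwdDiff (1 : ℕ))^[k] (Ffun l) 0
      = ∑ j ∈ Finset.range (k + 1), (-1 : ℝ) ^ (k - j) * (k.choose j : ℝ) * Ffun l j := by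
    rw [fwdDiff_iter_eq_sum_shift]
    refine Finset.sum_congr rfl fun j _ => ?_
    rw [zsmul_eq_mul]
    push_cast
    simp [smul_eq_mul]
  by_cases hc : (l + 1) / 2 ≤ k ∧ k ≤ l
  · rw [cC, if_pos hc, hdelta]
    rw [show ∑ j ∈ Finset.range (k + 1), (-1 : ℝ) ^ (k - j) * (k.choose j : ℝ) * Ffun l j
        = ∑ j ∈ Finset.Icc ((l + 1) / 2) k, (-1 : ℝ) ^ (k - j) * (k.choose j : ℝ) * Ffun l j by
      refine (Finset.sum_subset (fun j hj => Finset.mem_range.mpr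
        (by simp only [Finset.mem_Icc] at hj; omega)) fun j hj hj' => ?_).symm
      have : j < (l + 1) / 2 := by
        simp only [Finset.mem_range] at hj
        simp only [Finset.mem_Icc, not_and, not_le] at hj'
        omega
      rw [Ffun_eq_zero this, mul_zero]]
    rw [Finset.mul_sum, Finset.mul_sum]
    refine Finset.sum_congr rfl fun j hj => ?_
    simp only [Finset.mem_Icc] at hj
    have hsign : (-1 : ℝ) ^ (k - j) = (-1 : ℝ) ^ k * (-1 : ℝ) ^ j := by
      have h1 : (-1 : ℝ) ^ (k - j) * (-1 : ℝ) ^ j = (-1 : ℝ) ^ k := by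
        rw [← pow_add, Nat.sub_add_cancel hj.2]
      have h2 : ((-1 : ℝ) ^ j) * ((-1 : ℝ) ^ j) = 1 := by
        rw [← mul_pow]; norm_num
      calc (-1 : ℝ) ^ (k - j) = (-1 : ℝ) ^ (k - j) * (((-1 : ℝ) ^ j) * ((-1 : ℝ) ^ j)) := by
            rw [h2, mul_one]
        _ = (-1 : ℝ) ^ k * (-1 : ℝ) ^ j := by rw [← mul_assoc, h1]
    rw [hsign, Ffun]
    ring
  · rw [cC, if_neg hc]
    rcases Nat.lt_or_ge l k with hlk | hkl
    · rw [DeltaF_zero hlk]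
      simp
    · -- here k < (l+1)/2
      have hk2 : k < (l + 1) / 2 := by omega
      rw [hdelta]
      rw [eq_comm, mul_eq_zero]
      right
      refine Finset.sum_eq_zero fun j hj => ?_
      rw [Ffun_eq_zero (by simp only [Finset.mem_range] at hj; omega), mul_zero]

lemma newton (l n : ℕ) :
    ∑ k ∈ Finset.range (l + 1), (n.choose k : ℝ) * (fwdDiff (1 : ℕ))^[k] (Ffun l) 0
      = Ffun l n := by
  have h := shift_eq_sum_fwdDiff_iter (1 : ℕ) (Ffun l) n 0
  simp only [zero_add, smul_eq_mul, nsmul_eq_mul] at h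
  have h' : Ffun l n = ∑ k ∈ Finset.range (n + 1),
      (n.choose k : ℝ) * (fwdDiff (1 : ℕ))^[k] (Ffun l) 0 := by
    rw [← h]; congr 1; omega
  rw [h']
  rcases le_or_gt n l with hnl | hln
  · exact (Finset.sum_subset (by
      intro x hx; simp only [Finset.mem_range] at *; omega) fun k hk hk' => by
      simp only [Finset.mem_range, not_lt] at *
      rw [Nat.choose_eq_zero_of_lt (by omega), Nat.cast_zero, zero_mul]).symm
  · refine Finset.sum_subset (fun x hx => Finset.mem_range.mpr ?_) fun k hk hk' => ?_
    · have := Finset.mem_range.mp hx; omega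
    · have h1 := Finset.mem_range.mp hk
      have h2 : ¬ k < l + 1 := fun hcon => hk' (Finset.mem_range.mpr hcon)
      rw [DeltaF_zero (show l < k by omega)]
      simp

lemma descPochhammer_eval_prod (l : ℕ) (x : ℝ) :
    (descPochhammer ℝ l).eval x = ∏ t ∈ Finset.range l, (x - (t : ℝ)) := by
  induction l with
  | zero => simp [descPochhammer_zero]
  | succ l ih => rw [descPochhammer_succ_eval, ih, Finset.prod_range_succ]

lemma Fdesc (l n : ℕ) : Ffun l n = ((2 * n).descFactorial l : ℝ) := by
  rw [← descPochhammer_eval_eq_descFactorial ℝ (2 * n) l, descPochhammer_eval_prod, Ffun]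
  refine Finset.prod_congr rfl fun t _ => ?_
  push_cast; ring

lemma Godd (l n : ℕ) :
    (∏ t ∈ Finset.range l, ((2 * (n : ℝ) + 1) - (t : ℝ)))
      = ((2 * n + 1).descFactorial l : ℝ) := by
  rw [← descPochhammer_eval_eq_descFactorial ℝ (2 * n + 1) l, descPochhammer_eval_prod]
  refine Finset.prod_congr rfl fun t _ => ?_
  push_cast; ring

lemma scalar_I (l n : ℕ) :
    ∑ k ∈ Finset.range (l + 1), (n.descFactorial k : ℝ) * cC k l
      = ((2 * n).descFactorial l : ℝ) := by
  rw [← Fdesc, ← newton l n]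
  refine Finset.sum_congr rfl fun k _ => ?_
  rw [cC_eq, Nat.descFactorial_eq_factorial_mul_choose]
  have : (k.factorial : ℝ) ≠ 0 := by positivity
  push_cast
  field_simp

lemma scalar_II {l : ℕ} (n : ℕ) (hl : 1 ≤ l) :
    ∑ k ∈ Finset.range (l + 1), (n.descFactorial k : ℝ) * (cC k l + l * cC k (l - 1))
      = ((2 * n + 1).descFactorial l : ℝ) := by
  obtain ⟨u, rfl⟩ : ∃ u, l = u + 1 := ⟨l - 1, by omega⟩
  have hsplit : ∑ k ∈ Finset.range (u + 1 + 1),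
        (n.descFactorial k : ℝ) * (cC k (u + 1) + ((u + 1 : ℕ) : ℝ) * cC k (u + 1 - 1))
      = (∑ k ∈ Finset.range (u + 1 + 1), (n.descFactorial k : ℝ) * cC k (u + 1))
        + ((u : ℝ) + 1) * ∑ k ∈ Finset.range (u + 1 + 1), (n.descFactorial k : ℝ) * cC k u := by
    rw [Finset.mul_sum, ← Finset.sum_add_distrib]
    refine Finset.sum_congr rfl fun k _ => ?_
    simp only [Nat.add_sub_cancel]
    push_cast
    ring
  rw [hsplit, scalar_I]
  have h2 : ∑ k ∈ Finset.range (u + 1 + 1), (n.descFactorial k : ℝ) * cC k u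
      = ((2 * n).descFactorial u : ℝ) := by
    rw [Finset.sum_range_succ, cC_zero_right (by omega), mul_zero, add_zero, scalar_I]
  rw [h2, ← Godd (u + 1) n, ← Fdesc, ← Fdesc]
  -- now a product identity over ℝ
  rw [Ffun, Ffun, Finset.prod_range_succ,
    show ∏ t ∈ Finset.range (u + 1), ((2 * (n : ℝ) + 1) - (t : ℝ))
      = (∏ t ∈ Finset.range u, ((2 * (n : ℝ)) - (t : ℝ))) * (2 * (n : ℝ) + 1) by
      rw [Finset.prod_range_succ']
      simp only [Nat.cast_zero, sub_zero]
      congr 1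
      exact Finset.prod_congr rfl fun t _ => by push_cast; ring]
  push_cast
  ring













lemma bkl_eq (k l : ℕ) :
    bkl k l = if (l + 1) / 2 ≤ k ∧ k ≤ l then C (cC k l) * X ^ (2 * k - l) else 0 := by
  rw [bkl, cC]
  split_ifs with h <;> rfl

/-- `R0` of an even-parameter `b`, unconditional form. -/
lemma W0 (u k : ℕ) : RNm 2 0 (bkl k (2 * u)) = C (cC k (2 * u)) * X ^ (k - u) := by
  rw [bkl_eq]
  split_ifs with h
  · rw [show 2 * k - 2 * u = 2 * (k - u) by omega, RNm_C_mul two_pos, R0_even]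
  · rw [RNm_zero]
    rcases Nat.lt_or_ge k u with hk | hk
    · rw [cC_zero_left (show k < (2 * u + 1) / 2 by omega)]; simp
    · rw [cC_zero_right (show 2 * u < k by omega)]; simp

/-- `R1` of an odd-parameter `b`, unconditional form. -/
lemma W1 (u k : ℕ) :
    RNm 2 1 (bkl k (2 * u + 1)) = C (cC k (2 * u + 1)) * X ^ (k - (u + 1)) := by
  rw [bkl_eq]
  split_ifs with h
  · rw [show 2 * k - (2 * u + 1) = 2 * (k - (u + 1)) + 1 by omega, RNm_C_mul two_pos, R1_odd]
  · rw [RNm_zero]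
    rcases Nat.lt_or_ge k (u + 1) with hk | hk
    · rw [cC_zero_left (show k < (2 * u + 1 + 1) / 2 by omega)]; simp
    · rw [cC_zero_right (show 2 * u + 1 < k by omega)]; simp

lemma E1 (u k : ℕ) : RNm 2 1 (bkl k (2 * u)) = 0 := by
  rw [bkl_eq]
  split_ifs with h
  · rw [show 2 * k - 2 * u = 2 * (k - u) by omega, RNm_C_mul two_pos, R1_even, mul_zero]
  · exact RNm_zero _ _

lemma O1 (u k : ℕ) : RNm 2 0 (bkl k (2 * u + 1)) = 0 := by
  rw [bkl_eq]
  split_ifs with h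
  · rw [show 2 * k - (2 * u + 1) = 2 * (k - (u + 1)) + 1 by omega, RNm_C_mul two_pos, R0_odd,
      mul_zero]
  · exact RNm_zero _ _

/-- bracket for odd monomials, even `l = 2u` (including `u = 0`). -/
lemma BR2even (u k : ℕ) :
    RNm 2 0 (bkl k (2 * u)) + ((2 * u : ℕ) : ℝ[X]) * RNm 2 1 (bkl k (2 * u - 1))
      = C (cC k (2 * u) + (2 * u : ℕ) * cC k (2 * u - 1)) * X ^ (k - u) := by
  rcases Nat.eq_zero_or_pos u with rfl | hu
  · rw [W0]
    simp only [map_add, map_mul, map_natCast]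
    push_cast
    ring
  · obtain ⟨v, rfl⟩ : ∃ v, u = v + 1 := ⟨u - 1, by omega⟩
    rw [W0, show 2 * (v + 1) - 1 = 2 * v + 1 by omega, W1]
    simp only [map_add, map_mul, map_natCast]
    push_cast
    ring

/-- bracket for odd monomials, odd `l = 2u+1`. -/
lemma BR2odd (u k : ℕ) :
    X * RNm 2 1 (bkl k (2 * u + 1)) + ((2 * u + 1 : ℕ) : ℝ[X]) * RNm 2 0 (bkl k (2 * u))
      = C (cC k (2 * u + 1) + (2 * u + 1 : ℕ) * cC k (2 * u)) * X ^ (k - u) := by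
  rw [W1, W0]
  rcases Nat.lt_or_ge k (u + 1) with hk | hk
  · rw [cC_zero_left (show k < (2 * u + 1 + 1) / 2 by omega)]
    rcases Nat.lt_or_ge k u with hk2 | hk2
    · rw [cC_zero_left (show k < (2 * u + 1) / 2 by omega)]
      simp
    · -- k = u
      have : k - u = 0 := by omega
      rw [this]
      simp only [map_zero, zero_mul, mul_zero, zero_add, pow_zero, map_add, map_mul, map_natCast]
      push_cast
      ring
  · have h1 : (X : ℝ[X]) * (C (cC k (2 * u + 1)) * X ^ (k - (u + 1)))
        = C (cC k (2 * u + 1)) * X ^ (k - u) := by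
      rw [show k - u = k - (u + 1) + 1 by omega, pow_succ]
      ring
    rw [h1]
    simp only [map_add, map_mul, map_natCast]
    push_cast
    ring

/-- generic term collapse -/
lemma term_eq (n k w : ℕ) (β : ℝ) (h : k < w → β = 0) :
    C ((n.descFactorial k : ℝ)) * X ^ (n - k) * (C β * X ^ (k - w))
      = C ((n.descFactorial k : ℝ) * β) * X ^ (n - w) := by
  rcases Nat.lt_or_ge n k with hn | hn
  · rw [Nat.descFactorial_eq_zero_iff_lt.mpr hn]
    simp
  · rcases Nat.lt_or_ge k w with hw | hw
    · rw [h hw]; simp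
    · rw [show n - w = n - k + (k - w) by omega, pow_add, C_mul]
      ring





lemma iter_deriv_add (k : ℕ) (p q : ℝ[X]) :
    derivative^[k] (p + q) = derivative^[k] p + derivative^[k] q := by
  induction k generalizing p q with
  | zero => rfl
  | succ k ih =>
    rw [Function.iterate_succ_apply, derivative_add, ih, Function.iterate_succ_apply,
      Function.iterate_succ_apply]

lemma EZ (u k : ℕ) : ((2 * u : ℕ) : ℝ[X]) * RNm 2 0 (bkl k (2 * u - 1)) = 0 := by
  rcases Nat.eq_zero_or_pos u with rfl | hu
  · norm_num
  · obtain ⟨v, rfl⟩ : ∃ v, u = v + 1 := ⟨u - 1, by omega⟩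
    rw [show 2 * (v + 1) - 1 = 2 * v + 1 by omega, O1, mul_zero]

lemma cC_zero_zero : cC 0 0 = 1 := by
  rw [cC, if_pos (by omega)]
  norm_num

lemma bkl_zero_zero_R0 : RNm 2 0 (bkl 0 0) = 1 := by
  rw [bkl_eq, if_pos (by omega)]
  rw [show 2 * 0 - 0 = 2 * 0 by omega, RNm_C_mul two_pos, R0_even, cC_zero_zero]
  norm_num

lemma bkl_zero_zero_R1 : RNm 2 1 (bkl 0 0) = 0 := by
  rw [bkl_eq, if_pos (by omega)]
  rw [show 2 * 0 - 0 = 2 * 0 by omega, RNm_C_mul two_pos, R1_even, mul_zero]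

lemma split_deriv_pow (l t : ℕ) :
    RNm 2 0 (derivative^[l] (X ^ t : ℝ[X]))
        = ∑ k ∈ Finset.range (l + 1),
            (derivative^[k] (RNm 2 0 (X ^ t : ℝ[X])) * RNm 2 0 (bkl k l)
              + derivative^[k] (RNm 2 1 (X ^ t : ℝ[X]))
                  * (X * RNm 2 1 (bkl k l) + (l : ℝ[X]) * RNm 2 0 (bkl k (l - 1))))
      ∧ RNm 2 1 (derivative^[l] (X ^ t : ℝ[X]))
        = ∑ k ∈ Finset.range (l + 1),
            (derivative^[k] (RNm 2 0 (X ^ t : ℝ[X])) * RNm 2 1 (bkl k l)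
              + derivative^[k] (RNm 2 1 (X ^ t : ℝ[X]))
                  * (RNm 2 0 (bkl k l) + (l : ℝ[X]) * RNm 2 1 (bkl k (l - 1)))) := by
  rcases Nat.eq_zero_or_pos l with rfl | hl
  · constructor <;>
      · rw [Finset.sum_range_one]
        simp [bkl_zero_zero_R0, bkl_zero_zero_R1]
  rcases Nat.even_or_odd t with ⟨n, rfl⟩ | ⟨n, rfl⟩
  · -- even monomial
    rw [show n + n = 2 * n by ring]
    rw [R0_even, R1_even]
    simp only [iterate_derivative_zero, zero_mul, add_zero]
    rw [iterate_derivative_X_pow_eq_C_mul]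
    rcases Nat.even_or_odd l with ⟨u, rfl⟩ | ⟨u, rfl⟩
    · rw [show u + u = 2 * u by ring]
      constructor
      · -- j = 0, even l
        have hterm : ∀ k ∈ Finset.range (2 * u + 1),
            derivative^[k] (X ^ n : ℝ[X]) * RNm 2 0 (bkl k (2 * u))
              = C ((n.descFactorial k : ℝ) * cC k (2 * u)) * X ^ (n - u) := by
          intro k _
          rw [iterate_derivative_X_pow_eq_C_mul, W0]
          exact term_eq n k u _ fun h => cC_zero_left (by omega)
        rw [Finset.sum_congr rfl hterm, ← Finset.sum_mul, ← map_sum, scalar_I]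
        rcases le_or_gt u n with hun | hun
        · rw [show 2 * n - 2 * u = 2 * (n - u) by omega, RNm_C_mul two_pos, R0_even]
        · rw [Nat.descFactorial_eq_zero_iff_lt.mpr (by omega)]
          simp [RNm_zero]
      · -- j = 1, even l
        rw [show (∑ k ∈ Finset.range (2 * u + 1),
            derivative^[k] (X ^ n : ℝ[X]) * RNm 2 1 (bkl k (2 * u))) = 0 from
          Finset.sum_eq_zero fun k _ => by rw [E1, mul_zero]]
        rcases le_or_gt u n with hun | hun
        · rw [show 2 * n - 2 * u = 2 * (n - u) by omega, RNm_C_mul two_pos, R1_even, mul_zero]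
        · rw [Nat.descFactorial_eq_zero_iff_lt.mpr (by omega)]
          simp [RNm_zero]
    · constructor
      · -- j = 0, odd l
        rw [show (∑ k ∈ Finset.range (2 * u + 1 + 1),
            derivative^[k] (X ^ n : ℝ[X]) * RNm 2 0 (bkl k (2 * u + 1))) = 0 from
          Finset.sum_eq_zero fun k _ => by rw [O1, mul_zero]]
        rcases le_or_gt (u + 1) n with hun | hun
        · rw [show 2 * n - (2 * u + 1) = 2 * (n - u - 1) + 1 by omega, RNm_C_mul two_pos, R0_odd,
            mul_zero]
        · rw [Nat.descFactorial_eq_zero_iff_lt.mpr (by omega)]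
          simp [RNm_zero]
      · -- j = 1, odd l
        have hterm : ∀ k ∈ Finset.range (2 * u + 1 + 1),
            derivative^[k] (X ^ n : ℝ[X]) * RNm 2 1 (bkl k (2 * u + 1))
              = C ((n.descFactorial k : ℝ) * cC k (2 * u + 1)) * X ^ (n - (u + 1)) := by
          intro k _
          rw [iterate_derivative_X_pow_eq_C_mul, W1]
          exact term_eq n k (u + 1) _ fun h => cC_zero_left (by omega)
        rw [Finset.sum_congr rfl hterm, ← Finset.sum_mul, ← map_sum, scalar_I]
        rcases le_or_gt (u + 1) n with hun | hun
        · rw [show 2 * n - (2 * u + 1) = 2 * (n - u - 1) + 1 by omega, RNm_C_mul two_pos, R1_odd,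
            show n - u - 1 = n - (u + 1) by omega]
        · rw [Nat.descFactorial_eq_zero_iff_lt.mpr (by omega)]
          simp [RNm_zero]
  · -- odd monomial
    rw [R0_odd, R1_odd]
    simp only [iterate_derivative_zero, zero_mul, zero_add]
    rw [iterate_derivative_X_pow_eq_C_mul]
    rcases Nat.even_or_odd l with ⟨u, rfl⟩ | ⟨u, rfl⟩
    · rw [show u + u = 2 * u by ring]
      have hu : 1 ≤ u := by omega
      constructor
      · -- j = 0, even l
        rw [show (∑ k ∈ Finset.range (2 * u + 1), derivative^[k] (X ^ n : ℝ[X]) *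
              (X * RNm 2 1 (bkl k (2 * u)) + ((2 * u : ℕ) : ℝ[X]) * RNm 2 0 (bkl k (2 * u - 1))))
            = 0 from Finset.sum_eq_zero fun k _ => by rw [E1, mul_zero, zero_add, EZ, mul_zero]]
        rcases le_or_gt u n with hun | hun
        · rw [show 2 * n + 1 - 2 * u = 2 * (n - u) + 1 by omega, RNm_C_mul two_pos, R0_odd,
            mul_zero]
        · rw [Nat.descFactorial_eq_zero_iff_lt.mpr (by omega)]
          simp [RNm_zero]
      · -- j = 1, even l
        have hterm : ∀ k ∈ Finset.range (2 * u + 1),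
            derivative^[k] (X ^ n : ℝ[X]) *
                (RNm 2 0 (bkl k (2 * u)) + ((2 * u : ℕ) : ℝ[X]) * RNm 2 1 (bkl k (2 * u - 1)))
              = C ((n.descFactorial k : ℝ) *
                  (cC k (2 * u) + ((2 * u : ℕ) : ℝ) * cC k (2 * u - 1))) * X ^ (n - u) := by
          intro k _
          rw [iterate_derivative_X_pow_eq_C_mul, BR2even]
          refine term_eq n k u _ fun h => ?_
          rw [cC_zero_left (show k < (2 * u + 1) / 2 by omega),
            cC_zero_left (show k < (2 * u - 1 + 1) / 2 by omega)]
          ring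
        rw [Finset.sum_congr rfl hterm, ← Finset.sum_mul, ← map_sum, scalar_II n (by omega)]
        rcases le_or_gt u n with hun | hun
        · rw [show 2 * n + 1 - 2 * u = 2 * (n - u) + 1 by omega, RNm_C_mul two_pos, R1_odd]
        · rw [Nat.descFactorial_eq_zero_iff_lt.mpr (by omega)]
          simp [RNm_zero]
    · constructor
      · -- j = 0, odd l
        have hterm : ∀ k ∈ Finset.range (2 * u + 1 + 1),
            derivative^[k] (X ^ n : ℝ[X]) *
                (X * RNm 2 1 (bkl k (2 * u + 1))
                  + ((2 * u + 1 : ℕ) : ℝ[X]) * RNm 2 0 (bkl k (2 * u + 1 - 1)))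
              = C ((n.descFactorial k : ℝ) *
                  (cC k (2 * u + 1) + ((2 * u + 1 : ℕ) : ℝ) * cC k (2 * u + 1 - 1)))
                * X ^ (n - u) := by
          intro k _
          rw [iterate_derivative_X_pow_eq_C_mul, show 2 * u + 1 - 1 = 2 * u by omega, BR2odd]
          refine term_eq n k u _ fun h => ?_
          rw [cC_zero_left (show k < (2 * u + 1 + 1) / 2 by omega),
            cC_zero_left (show k < (2 * u + 1) / 2 by omega)]
          ring
        rw [Finset.sum_congr rfl hterm, ← Finset.sum_mul, ← map_sum, scalar_II n (by omega)]
        rcases le_or_gt u n with hun | hun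
        · rw [show 2 * n + 1 - (2 * u + 1) = 2 * (n - u) by omega, RNm_C_mul two_pos, R0_even]
        · rw [Nat.descFactorial_eq_zero_iff_lt.mpr (by omega)]
          simp [RNm_zero]
      · -- j = 1, odd l
        rw [show (∑ k ∈ Finset.range (2 * u + 1 + 1), derivative^[k] (X ^ n : ℝ[X]) *
              (RNm 2 0 (bkl k (2 * u + 1))
                + ((2 * u + 1 : ℕ) : ℝ[X]) * RNm 2 1 (bkl k (2 * u + 1 - 1))))
            = 0 from Finset.sum_eq_zero fun k _ => by
          rw [O1, show 2 * u + 1 - 1 = 2 * u by omega, E1]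
          simp]
        rcases le_or_gt u n with hun | hun
        · rw [show 2 * n + 1 - (2 * u + 1) = 2 * (n - u) by omega, RNm_C_mul two_pos, R1_even,
            mul_zero]
        · rw [Nat.descFactorial_eq_zero_iff_lt.mpr (by omega)]
          simp [RNm_zero]














lemma RNm_sum {N : ℕ} (hN : 0 < N) (m : ℕ) {ι : Type*} (s : Finset ι) (f : ι → ℝ[X]) :
    RNm N m (∑ i ∈ s, f i) = ∑ i ∈ s, RNm N m (f i) := by
  ext n
  rw [coeff_RNm hN, finset_sum_coeff, finset_sum_coeff]
  exact Finset.sum_congr rfl fun i _ => (coeff_RNm hN m (f i) n).symm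

lemma split_deriv (l : ℕ) (q : ℝ[X]) :
    RNm 2 0 (derivative^[l] q)
        = ∑ k ∈ Finset.range (l + 1),
            (derivative^[k] (RNm 2 0 q) * RNm 2 0 (bkl k l)
              + derivative^[k] (RNm 2 1 q)
                  * (X * RNm 2 1 (bkl k l) + (l : ℝ[X]) * RNm 2 0 (bkl k (l - 1))))
      ∧ RNm 2 1 (derivative^[l] q)
        = ∑ k ∈ Finset.range (l + 1),
            (derivative^[k] (RNm 2 0 q) * RNm 2 1 (bkl k l)
              + derivative^[k] (RNm 2 1 q)
                  * (RNm 2 0 (bkl k l) + (l : ℝ[X]) * RNm 2 1 (bkl k (l - 1)))) := by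
  induction q using Polynomial.induction_on' with
  | add p r hp hr =>
    constructor
    · rw [iter_deriv_add, RNm_add two_pos, RNm_add two_pos, RNm_add two_pos, hp.1, hr.1,
        ← Finset.sum_add_distrib]
      refine Finset.sum_congr rfl fun k _ => ?_
      rw [iter_deriv_add, iter_deriv_add]
      ring
    · rw [iter_deriv_add, RNm_add two_pos, RNm_add two_pos, RNm_add two_pos, hp.2, hr.2,
        ← Finset.sum_add_distrib]
      refine Finset.sum_congr rfl fun k _ => ?_
      rw [iter_deriv_add, iter_deriv_add]
      ring
  | monomial t c =>
    rw [← C_mul_X_pow_eq_monomial]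
    have h := split_deriv_pow l t
    constructor
    · rw [iterate_derivative_C_mul, RNm_C_mul two_pos, RNm_C_mul two_pos, RNm_C_mul two_pos,
        h.1, Finset.mul_sum]
      refine Finset.sum_congr rfl fun k _ => ?_
      rw [iterate_derivative_C_mul, iterate_derivative_C_mul]
      ring
    · rw [iterate_derivative_C_mul, RNm_C_mul two_pos, RNm_C_mul two_pos, RNm_C_mul two_pos,
        h.2, Finset.mul_sum]
      refine Finset.sum_congr rfl fun k _ => ?_
      rw [iterate_derivative_C_mul, iterate_derivative_C_mul]
      ring

/-- collapsed per-`l` identity, entry `j` -/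
lemma star (l : ℕ) (aP q : ℝ[X]) :
    (∑ k ∈ Finset.range (l + 1),
        (derivative^[k] (RNm 2 0 q) * (Ckl k l aP) 0 0
          + derivative^[k] (RNm 2 1 q) * (Ckl k l aP) 1 0)
      = RNm 2 0 (aP * derivative^[l] q))
    ∧ (∑ k ∈ Finset.range (l + 1),
        (derivative^[k] (RNm 2 0 q) * (Ckl k l aP) 0 1
          + derivative^[k] (RNm 2 1 q) * (Ckl k l aP) 1 1)
      = RNm 2 1 (aP * derivative^[l] q)) := by
  have hd := split_deriv l q
  have hm := RNm_mul aP (derivative^[l] q)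
  constructor
  · calc ∑ k ∈ Finset.range (l + 1),
          (derivative^[k] (RNm 2 0 q) * (Ckl k l aP) 0 0
            + derivative^[k] (RNm 2 1 q) * (Ckl k l aP) 1 0)
        = (∑ k ∈ Finset.range (l + 1),
              (derivative^[k] (RNm 2 0 q) * RNm 2 0 (bkl k l)
                + derivative^[k] (RNm 2 1 q)
                    * (X * RNm 2 1 (bkl k l) + (l : ℝ[X]) * RNm 2 0 (bkl k (l - 1)))))
              * RNm 2 0 aP
          + (∑ k ∈ Finset.range (l + 1),
              (derivative^[k] (RNm 2 0 q) * RNm 2 1 (bkl k l)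
                + derivative^[k] (RNm 2 1 q)
                    * (RNm 2 0 (bkl k l) + (l : ℝ[X]) * RNm 2 1 (bkl k (l - 1)))))
              * (X * RNm 2 1 aP) := by
          rw [Finset.sum_mul, Finset.sum_mul, ← Finset.sum_add_distrib]
          refine Finset.sum_congr rfl fun k _ => ?_
          simp only [Ckl, Matrix.mul_apply, Fin.sum_univ_two, Matrix.of_apply,
            Matrix.cons_val', Matrix.cons_val_zero, Matrix.cons_val_one, Matrix.head_cons,
            Matrix.empty_val', Matrix.cons_val_fin_one, Matrix.head_fin_const]
          ring
      _ = RNm 2 0 (aP * derivative^[l] q) := by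
          rw [← hd.1, ← hd.2, hm.1]; ring
  · calc ∑ k ∈ Finset.range (l + 1),
          (derivative^[k] (RNm 2 0 q) * (Ckl k l aP) 0 1
            + derivative^[k] (RNm 2 1 q) * (Ckl k l aP) 1 1)
        = (∑ k ∈ Finset.range (l + 1),
              (derivative^[k] (RNm 2 0 q) * RNm 2 0 (bkl k l)
                + derivative^[k] (RNm 2 1 q)
                    * (X * RNm 2 1 (bkl k l) + (l : ℝ[X]) * RNm 2 0 (bkl k (l - 1)))))
              * RNm 2 1 aP
          + (∑ k ∈ Finset.range (l + 1),
              (derivative^[k] (RNm 2 0 q) * RNm 2 1 (bkl k l)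
                + derivative^[k] (RNm 2 1 q)
                    * (RNm 2 0 (bkl k l) + (l : ℝ[X]) * RNm 2 1 (bkl k (l - 1)))))
              * RNm 2 0 aP := by
          rw [Finset.sum_mul, Finset.sum_mul, ← Finset.sum_add_distrib]
          refine Finset.sum_congr rfl fun k _ => ?_
          simp only [Ckl, Matrix.mul_apply, Fin.sum_univ_two, Matrix.of_apply,
            Matrix.cons_val', Matrix.cons_val_zero, Matrix.cons_val_one, Matrix.head_cons,
            Matrix.empty_val', Matrix.cons_val_fin_one, Matrix.head_fin_const]
          ring
      _ = RNm 2 1 (aP * derivative^[l] q) := by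
          rw [← hd.1, ← hd.2, hm.2]; ring

lemma main_entry (m : ℕ) (a : ℕ → ℝ[X]) (ha0 : a 0 = 0) (q : ℝ[X]) (γq : ℝ)
    (hq : ∑ l ∈ Finset.Icc 1 m, a l * derivative^[l] q = C γq * q) :
    ((∑ k ∈ Finset.range (m + 1), ∑ l ∈ Finset.Icc k m,
        (derivative^[k] (RNm 2 0 q) * (Ckl k l (a l)) 0 0
          + derivative^[k] (RNm 2 1 q) * (Ckl k l (a l)) 1 0))
      = C γq * RNm 2 0 q)
    ∧ ((∑ k ∈ Finset.range (m + 1), ∑ l ∈ Finset.Icc k m,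
        (derivative^[k] (RNm 2 0 q) * (Ckl k l (a l)) 0 1
          + derivative^[k] (RNm 2 1 q) * (Ckl k l (a l)) 1 1))
      = C γq * RNm 2 1 q) := by
  have hcomm : ∀ (x y : ℕ), x ∈ Finset.range (m + 1) ∧ y ∈ Finset.Icc x m ↔
      x ∈ Finset.range (y + 1) ∧ y ∈ Finset.range (m + 1) := by
    intro x y
    simp only [Finset.mem_range, Finset.mem_Icc]
    omega
  constructor
  · calc ∑ k ∈ Finset.range (m + 1), ∑ l ∈ Finset.Icc k m,
          (derivative^[k] (RNm 2 0 q) * (Ckl k l (a l)) 0 0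
            + derivative^[k] (RNm 2 1 q) * (Ckl k l (a l)) 1 0)
        = ∑ l ∈ Finset.range (m + 1), ∑ k ∈ Finset.range (l + 1),
          (derivative^[k] (RNm 2 0 q) * (Ckl k l (a l)) 0 0
            + derivative^[k] (RNm 2 1 q) * (Ckl k l (a l)) 1 0) :=
          Finset.sum_comm' hcomm
      _ = ∑ l ∈ Finset.range (m + 1), RNm 2 0 (a l * derivative^[l] q) :=
          Finset.sum_congr rfl fun l _ => (star l (a l) q).1
      _ = RNm 2 0 (∑ l ∈ Finset.Icc 1 m, a l * derivative^[l] q) := by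
          rw [Finset.range_eq_Ico, Finset.sum_eq_sum_Ico_succ_bot (by omega), ha0, zero_mul,
            RNm_zero, zero_add, Finset.Ico_add_one_right_eq_Icc, RNm_sum two_pos]
      _ = C γq * RNm 2 0 q := by rw [hq, RNm_C_mul two_pos]
  · calc ∑ k ∈ Finset.range (m + 1), ∑ l ∈ Finset.Icc k m,
          (derivative^[k] (RNm 2 0 q) * (Ckl k l (a l)) 0 1
            + derivative^[k] (RNm 2 1 q) * (Ckl k l (a l)) 1 1)
        = ∑ l ∈ Finset.range (m + 1), ∑ k ∈ Finset.range (l + 1),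
          (derivative^[k] (RNm 2 0 q) * (Ckl k l (a l)) 0 1
            + derivative^[k] (RNm 2 1 q) * (Ckl k l (a l)) 1 1) :=
          Finset.sum_comm' hcomm
      _ = ∑ l ∈ Finset.range (m + 1), RNm 2 1 (a l * derivative^[l] q) :=
          Finset.sum_congr rfl fun l _ => (star l (a l) q).2
      _ = RNm 2 1 (∑ l ∈ Finset.Icc 1 m, a l * derivative^[l] q) := by
          rw [Finset.range_eq_Ico, Finset.sum_eq_sum_Ico_succ_bot (by omega), ha0, zero_mul,
            RNm_zero, zero_add, Finset.Ico_add_one_right_eq_Icc, RNm_sum two_pos]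
      _ = C γq * RNm 2 1 q := by rw [hq, RNm_C_mul two_pos]


theorem stmt5 (m : ℕ) (a : ℕ → ℝ[X]) (ha0 : a 0 = 0)
    (hadeg : ∀ l ∈ Finset.Icc 1 m, (a l).degree ≤ (l : ℕ))
    (p : ℕ → ℝ[X]) (γ : ℕ → ℝ)
    (hpdeg : ∀ n : ℕ, (p n).degree = n)
    (hode : ∀ n : ℕ,
      ∑ l ∈ Finset.Icc 1 m, a l * derivative^[l] (p n) = C (γ n) * p n) :
    ∀ n : ℕ,
      ∑ k ∈ Finset.range (m + 1),
          matDeriv k (matPoly 2 p n) * (∑ l ∈ Finset.Icc k m, Ckl k l (a l))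
        = (Matrix.of ![![C (γ (2 * n)), 0], ![0, C (γ (2 * n + 1))]]) *
            matPoly 2 p n := by
  intro n
  apply Matrix.ext
  intro i j
  rw [Matrix.sum_apply]
  have hL : ∀ k, (matDeriv k (matPoly 2 p n) * ∑ l ∈ Finset.Icc k m, Ckl k l (a l)) i j
      = ∑ l ∈ Finset.Icc k m,
          (derivative^[k] (RNm 2 0 (p (n * 2 + (i : ℕ)))) * (Ckl k l (a l)) 0 j
            + derivative^[k] (RNm 2 1 (p (n * 2 + (i : ℕ)))) * (Ckl k l (a l)) 1 j) := by
    intro k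
    rw [Matrix.mul_apply, Fin.sum_univ_two, Matrix.sum_apply, Matrix.sum_apply,
      Finset.mul_sum, Finset.mul_sum, ← Finset.sum_add_distrib]
    exact Finset.sum_congr rfl fun l _ => rfl
  rw [Finset.sum_congr rfl fun k _ => hL k]
  fin_cases i <;> fin_cases j <;>
    simp only [Matrix.mul_apply, Fin.sum_univ_two, Matrix.of_apply, Matrix.cons_val',
      Matrix.cons_val_zero, Matrix.cons_val_one, Matrix.head_cons, Matrix.empty_val',
      Matrix.cons_val_fin_one, Matrix.head_fin_const, matPoly, zero_mul, add_zero, zero_add,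
      Fin.mk_zero, Fin.mk_one, Fin.val_zero, Fin.val_one, Fin.isValue]
  · have hmain := main_entry m a ha0 (p (n * 2)) (γ (n * 2)) (hode (n * 2))
    rw [show 2 * n = n * 2 by ring]
    simpa using hmain.1
  · have hmain := main_entry m a ha0 (p (n * 2)) (γ (n * 2)) (hode (n * 2))
    rw [show 2 * n = n * 2 by ring]
    simpa using hmain.2
  · have hmain := main_entry m a ha0 (p (n * 2 + 1)) (γ (n * 2 + 1)) (hode (n * 2 + 1))
    rw [show 2 * n + 1 = n * 2 + 1 by ring]
    simpa using hmain.1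
  · have hmain := main_entry m a ha0 (p (n * 2 + 1)) (γ (n * 2 + 1)) (hode (n * 2 + 1))
    rw [show 2 * n + 1 = n * 2 + 1 by ring]
    simpa using hmain.2
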